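/- arXiv:2406.18978 — 3 statements merged into one kernel-verified Lean document; each statement's English description precedes it below -/
import Mathlib

section
/- Let $a_0 > 0$, $b_0 > 0$, and for $i = 1, \dots, n$ let $a_i > 0$ and $A_i > 0$. Define $D(s) = a_0 + b_0 s + \sum_{i=1}^n a_i s/(s + A_i)$ for complex $s$ not equal to any $-A_i$. If $s = p + iq$ with $p, q \in \mathbb{R}$ is a root of $D(s) = 0$, then $p < 0$ and $q = 0$. -/
/-- If `s = p + iq` is a root of `D(s) = a₀ + b₀ s + ∑ aᵢ s/(s + Aᵢ)` with all
parameters positive, then `p < 0` and `q = 0`. -/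
theorem stmt_0 (n : ℕ) (a0 b0 : ℝ) (ha0 : 0 < a0) (hb0 : 0 < b0)
    (a A : Fin n → ℝ) (ha : ∀ i, 0 < a i) (hA : ∀ i, 0 < A i)
    (p q : ℝ)
    (hdom : ∀ i, (p : ℂ) + q * Complex.I ≠ -(A i : ℂ))
    (hroot : (a0 : ℂ) + (b0 : ℂ) * ((p : ℂ) + q * Complex.I) +
      ∑ i, (a i : ℂ) * ((p : ℂ) + q * Complex.I) /
        (((p : ℂ) + q * Complex.I) + (A i : ℂ)) = 0) :
    p < 0 ∧ q = 0 := by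
  have hM : ∀ i, 0 < (p + A i) * (p + A i) + q * q := by
    intro i
    have h : ((p : ℂ) + q * Complex.I) + (A i : ℂ) ≠ 0 := by
      intro h'; exact hdom i (by linear_combination h')
    have h2 : 0 < Complex.normSq (((p : ℂ) + q * Complex.I) + (A i : ℂ)) :=
      Complex.normSq_pos.mpr h
    simp [Complex.normSq_apply] at h2
    nlinarith [h2]
  have him := congrArg Complex.im hroot
  have hre := congrArg Complex.re hroot
  simp [Complex.div_im, Complex.div_re, Complex.normSq_apply, Complex.im_sum,
    Complex.re_sum] at him hre
  -- q = 0
  have hsum : (∑ x : Fin n, a x * q * (p + A x) / ((p + A x) * (p + A x) + q * q)) -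
      ∑ x : Fin n, a x * p * q / ((p + A x) * (p + A x) + q * q) =
      q * ∑ x : Fin n, a x * A x / ((p + A x) * (p + A x) + q * q) := by
    rw [← Finset.sum_sub_distrib, Finset.mul_sum]
    refine Finset.sum_congr rfl fun x _ => ?_
    have hMx : ((p + A x) * (p + A x) + q * q) ≠ 0 := ne_of_gt (hM x)
    field_simp
    ring
  have hSpos : 0 ≤ ∑ x : Fin n, a x * A x / ((p + A x) * (p + A x) + q * q) :=
    Finset.sum_nonneg fun x _ => le_of_lt (div_pos (mul_pos (ha x) (hA x)) (hM x))
  have hq : q * (b0 + ∑ x : Fin n, a x * A x / ((p + A x) * (p + A x) + q * q)) = 0 := by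
    linear_combination him - hsum
  have hq0 : q = 0 := by
    rcases mul_eq_zero.mp hq with h | h
    · exact h
    · linarith
  subst hq0
  refine ⟨?_, rfl⟩
  by_contra hp
  push_neg at hp
  have hterm : 0 ≤ ∑ x : Fin n,
      (a x * p * (p + A x) / ((p + A x) * (p + A x) + 0 * 0) +
        a x * 0 * 0 / ((p + A x) * (p + A x) + 0 * 0)) := by
    refine Finset.sum_nonneg fun x _ => ?_
    have : 0 ≤ a x * p * (p + A x) / ((p + A x) * (p + A x) + 0 * 0) := by
      apply div_nonneg _ (le_of_lt (hM x))
      have h1 := hA x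
      exact mul_nonneg (mul_nonneg (ha x).le hp) (by linarith)
    simpa using this
  nlinarith [hre, hterm, mul_nonneg (le_of_lt hb0) hp]
end

section
/- Let $\eta_0, \dots, \eta_n > 0$ and $C_0, \dots, C_n$ symmetric positive definite operators on a finite-dimensional real inner product space $W$, each satisfying $c_* \|ξ\|^2 \leq \langle C_i ξ, ξ\rangle$ and $\|C_i\| \leq c^*$ for constants $0 < c_* \leq c^*$. Then there exists a constant $c > 0$, depending only on $n, c_*, c^*, \eta_0, \dots, \eta_n$, such that $\langle -\mathcal{C} L_b \, Y, Y \rangle \geq c \|Y\|^2$ for all $Y \in W^{n+1}$. -/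
open scoped RealInnerProductSpace

/-!
Once `C₀` and `Cᵢ` are moved across the inner product, the form depends on `Y` only through
`a = C₀ ψ` and `bᵢ = Cᵢ φᵢ`, and equals `η₀⁻¹ ‖a‖² + ∑ ηᵢ⁻¹ ‖a - bᵢ‖²`. Since
`‖bᵢ‖² ≤ 2 ‖a‖² + 2 ‖a - bᵢ‖²`, this dominates `(‖a‖² + ∑ ‖bᵢ‖²) / K` with
`K = (1 + 2n) η₀ + 2 ∑ ηᵢ`, and coercivity gives `‖Cξ‖ ≥ c_* ‖ξ‖`; so `c = c_*² / K` works.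
-/

section

variable {E : Type*} [NormedAddCommGroup E] [InnerProductSpace ℝ E]

lemma mul_norm_le_norm_apply_of_coercive {T : E → E} {c : ℝ}
    (hT : ∀ ξ, c * ‖ξ‖ ^ 2 ≤ ⟪T ξ, ξ⟫) (ξ : E) : c * ‖ξ‖ ≤ ‖T ξ‖ := by
  rcases (norm_nonneg ξ).eq_or_lt with hξ | hξ
  · simp [← hξ]
  · refine le_of_mul_le_mul_right ?_ hξ
    calc c * ‖ξ‖ * ‖ξ‖ = c * ‖ξ‖ ^ 2 := by ring
      _ ≤ ⟪T ξ, ξ⟫ := hT ξ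
      _ ≤ ‖T ξ‖ * ‖ξ‖ := real_inner_le_norm _ _

lemma sq_mul_norm_sq_le_norm_apply_sq_of_coercive {T : E → E} {c : ℝ} (hc : 0 ≤ c)
    (hT : ∀ ξ, c * ‖ξ‖ ^ 2 ≤ ⟪T ξ, ξ⟫) (ξ : E) : c ^ 2 * ‖ξ‖ ^ 2 ≤ ‖T ξ‖ ^ 2 := by
  rw [← mul_pow]
  exact pow_le_pow_left₀ (by positivity) (mul_norm_le_norm_apply_of_coercive hT ξ) 2

end

section

variable {E : Type*} [NormedAddCommGroup E] [InnerProductSpace ℝ E] {ι : Type*} [Fintype ι]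

lemma inner_burgers_eq (a : E) (b : ι → E) (η0 : ℝ) (η : ι → ℝ) :
    ⟪-((-(η0⁻¹ + ∑ i, (η i)⁻¹)) • a + ∑ i, (η i)⁻¹ • b i), a⟫ +
        ∑ i, ⟪-((η i)⁻¹ • (a - b i)), b i⟫ =
      η0⁻¹ * ‖a‖ ^ 2 + ∑ i, (η i)⁻¹ * ‖a - b i‖ ^ 2 := by
  have hterm : ∀ i, (η i)⁻¹ * ‖a - b i‖ ^ 2 =
      (η i)⁻¹ * ‖a‖ ^ 2 - (η i)⁻¹ * ⟪b i, a⟫ + ⟪-((η i)⁻¹ • (a - b i)), b i⟫ := fun i => by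
    rw [norm_sub_sq_real, inner_neg_left, real_inner_smul_left, inner_sub_left,
      real_inner_self_eq_norm_sq, real_inner_comm]
    ring
  simp only [hterm, inner_neg_left, inner_add_left, real_inner_smul_left, sum_inner,
    real_inner_self_eq_norm_sq, Finset.sum_add_distrib, Finset.sum_sub_distrib,
    ← Finset.sum_mul]
  ring

lemma burgers_form_eq {C0 : E →L[ℝ] E} {C : ι → E →L[ℝ] E}
    (hC0 : (C0 : E →ₗ[ℝ] E).IsSymmetric) (hC : ∀ i, (C i : E →ₗ[ℝ] E).IsSymmetric)
    (η0 : ℝ) (η : ι → ℝ) (ψ : E) (φ : ι → E) :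
    ⟪-(C0 ((-(η0⁻¹ + ∑ i, (η i)⁻¹)) • C0 ψ + ∑ i, (η i)⁻¹ • C i (φ i))), ψ⟫ +
        ∑ i, ⟪-(C i ((η i)⁻¹ • (C0 ψ - C i (φ i)))), φ i⟫ =
      η0⁻¹ * ‖C0 ψ‖ ^ 2 + ∑ i, (η i)⁻¹ * ‖C0 ψ - C i (φ i)‖ ^ 2 := by
  have hC0ψ : ∀ x, ⟪C0 x, ψ⟫ = ⟪x, C0 ψ⟫ := fun x => hC0 x ψ
  have hCφ : ∀ i x, ⟪C i x, φ i⟫ = ⟪x, C i (φ i)⟫ := fun i x => hC i x (φ i)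
  rw [← inner_burgers_eq]
  simp only [inner_neg_left, hC0ψ, hCφ]

end

section

variable {E : Type*} [SeminormedAddCommGroup E] {ι : Type*} [Fintype ι]

lemma norm_sq_le_two_mul_add (a b : E) : ‖b‖ ^ 2 ≤ 2 * (‖a‖ ^ 2 + ‖a - b‖ ^ 2) :=
  calc ‖b‖ ^ 2 ≤ (‖a‖ + ‖a - b‖) ^ 2 := by
        gcongr
        simpa using norm_sub_le a (a - b)
    _ ≤ 2 * (‖a‖ ^ 2 + ‖a - b‖ ^ 2) := add_sq_le

lemma norm_sq_add_sum_norm_sq_le_mul_weighted (a : E) (b : ι → E) {η0 : ℝ} {η : ι → ℝ}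
    (hη0 : 0 < η0) (hη : ∀ i, 0 < η i) :
    ‖a‖ ^ 2 + ∑ i, ‖b i‖ ^ 2 ≤ ((1 + 2 * Fintype.card ι) * η0 + 2 * ∑ i, η i) *
      (η0⁻¹ * ‖a‖ ^ 2 + ∑ i, (η i)⁻¹ * ‖a - b i‖ ^ 2) := by
  set K := (1 + 2 * Fintype.card ι) * η0 + 2 * ∑ i, η i
  have hsum : 0 ≤ ∑ i, η i := Finset.sum_nonneg fun i _ => (hη i).le
  have hψ : (1 + 2 * Fintype.card ι) * ‖a‖ ^ 2 ≤ K * (η0⁻¹ * ‖a‖ ^ 2) :=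
    calc (1 + 2 * Fintype.card ι) * ‖a‖ ^ 2
        = (1 + 2 * Fintype.card ι) * η0 * (η0⁻¹ * ‖a‖ ^ 2) := by field_simp
      _ ≤ K * (η0⁻¹ * ‖a‖ ^ 2) := by gcongr; linarith
  have hφ : ∀ i, 2 * ‖a - b i‖ ^ 2 ≤ K * ((η i)⁻¹ * ‖a - b i‖ ^ 2) := fun i => by
    have hηK : 2 * η i ≤ K := by
      have := Finset.single_le_sum (fun j _ => (hη j).le) (Finset.mem_univ i)
      have : 0 ≤ (1 + 2 * (Fintype.card ι : ℝ)) * η0 := by positivity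
      linarith
    calc 2 * ‖a - b i‖ ^ 2 = 2 * η i * ((η i)⁻¹ * ‖a - b i‖ ^ 2) := by
          field_simp [(hη i).ne']
      _ ≤ K * ((η i)⁻¹ * ‖a - b i‖ ^ 2) :=
          mul_le_mul_of_nonneg_right hηK (mul_nonneg (inv_nonneg.2 (hη i).le) (sq_nonneg _))
  calc ‖a‖ ^ 2 + ∑ i, ‖b i‖ ^ 2
      ≤ ‖a‖ ^ 2 + ∑ i, 2 * (‖a‖ ^ 2 + ‖a - b i‖ ^ 2) := by
        gcongr with i; exact norm_sq_le_two_mul_add a (b i)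
    _ = (1 + 2 * Fintype.card ι) * ‖a‖ ^ 2 + ∑ i, 2 * ‖a - b i‖ ^ 2 := by
        simp only [mul_add, Finset.sum_add_distrib, Finset.sum_const, Finset.card_univ,
          nsmul_eq_mul]
        ring
    _ ≤ K * (η0⁻¹ * ‖a‖ ^ 2) + ∑ i, K * ((η i)⁻¹ * ‖a - b i‖ ^ 2) :=
        add_le_add hψ (Finset.sum_le_sum fun i _ => hφ i)
    _ = K * (η0⁻¹ * ‖a‖ ^ 2 + ∑ i, (η i)⁻¹ * ‖a - b i‖ ^ 2) := by
        rw [← Finset.mul_sum, mul_add]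

end

theorem stmt_8_general {W : Type*} [NormedAddCommGroup W] [InnerProductSpace ℝ W]
    (n : ℕ)
    (η0 : ℝ) (η : Fin n → ℝ) (hη0 : 0 < η0) (hη : ∀ i, 0 < η i)
    (cs : ℝ) (hcs : 0 < cs)
    (C0 : W →L[ℝ] W) (C : Fin n → W →L[ℝ] W)
    (hC0sym : ∀ x y : W, ⟪C0 x, y⟫ = ⟪x, C0 y⟫)
    (hCsym : ∀ i, ∀ x y : W, ⟪C i x, y⟫ = ⟪x, C i y⟫)
    (hC0lb : ∀ ξ : W, cs * ‖ξ‖ ^ 2 ≤ ⟪C0 ξ, ξ⟫)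
    (hClb : ∀ i, ∀ ξ : W, cs * ‖ξ‖ ^ 2 ≤ ⟪C i ξ, ξ⟫) :
    ∃ c > 0, ∀ (ψ : W) (φ : Fin n → W),
      ⟪-(C0 ((-(η0⁻¹ + ∑ i, (η i)⁻¹)) • C0 ψ + ∑ i, (η i)⁻¹ • C i (φ i))), ψ⟫ +
        ∑ i, ⟪-(C i ((η i)⁻¹ • (C0 ψ - C i (φ i)))), φ i⟫ ≥
      c * (‖ψ‖ ^ 2 + ∑ i, ‖φ i‖ ^ 2) := by
  set K := (1 + 2 * Fintype.card (Fin n)) * η0 + 2 * ∑ i, η i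
  have hK : 0 < K := by
    have := Finset.sum_nonneg fun i (_ : i ∈ Finset.univ) => (hη i).le
    positivity
  refine ⟨cs ^ 2 / K, by positivity, fun ψ φ => ?_⟩
  rw [burgers_form_eq hC0sym hCsym, ge_iff_le, div_mul_eq_mul_div, div_le_iff₀' hK]
  calc cs ^ 2 * (‖ψ‖ ^ 2 + ∑ i, ‖φ i‖ ^ 2)
      = cs ^ 2 * ‖ψ‖ ^ 2 + ∑ i, cs ^ 2 * ‖φ i‖ ^ 2 := by rw [mul_add, Finset.mul_sum]
    _ ≤ ‖C0 ψ‖ ^ 2 + ∑ i, ‖C i (φ i)‖ ^ 2 :=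
        add_le_add (sq_mul_norm_sq_le_norm_apply_sq_of_coercive hcs.le hC0lb ψ)
          (Finset.sum_le_sum fun i _ =>
            sq_mul_norm_sq_le_norm_apply_sq_of_coercive hcs.le (hClb i) (φ i))
    _ ≤ K * (η0⁻¹ * ‖C0 ψ‖ ^ 2 + ∑ i, (η i)⁻¹ * ‖C0 ψ - C i (φ i)‖ ^ 2) :=
        norm_sq_add_sum_norm_sq_le_mul_weighted _ _ hη0 hη

/-- Coercivity of the extended Burgers quadratic form: there is `c > 0` with
`⟨-𝒞 L_b Y, Y⟩ ≥ c ‖Y‖²` for all `Y = (ψ, φ) ∈ W^{n+1}`. -/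
theorem stmt_8 {W : Type*} [NormedAddCommGroup W] [InnerProductSpace ℝ W]
    [FiniteDimensional ℝ W] (n : ℕ)
    (η0 : ℝ) (η : Fin n → ℝ) (hη0 : 0 < η0) (hη : ∀ i, 0 < η i)
    (cs cS : ℝ) (hcs : 0 < cs) (hcsS : cs ≤ cS)
    (C0 : W →L[ℝ] W) (C : Fin n → W →L[ℝ] W)
    (hC0sym : ∀ x y : W, ⟪C0 x, y⟫ = ⟪x, C0 y⟫)
    (hCsym : ∀ i, ∀ x y : W, ⟪C i x, y⟫ = ⟪x, C i y⟫)
    (hC0lb : ∀ ξ : W, cs * ‖ξ‖ ^ 2 ≤ ⟪C0 ξ, ξ⟫)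
    (hClb : ∀ i, ∀ ξ : W, cs * ‖ξ‖ ^ 2 ≤ ⟪C i ξ, ξ⟫)
    (hC0ub : ‖C0‖ ≤ cS) (hCub : ∀ i, ‖C i‖ ≤ cS) :
    ∃ c > 0, ∀ (ψ : W) (φ : Fin n → W),
      ⟪-(C0 ((-(η0⁻¹ + ∑ i, (η i)⁻¹)) • C0 ψ + ∑ i, (η i)⁻¹ • C i (φ i))), ψ⟫ +
        ∑ i, ⟪-(C i ((η i)⁻¹ • (C0 ψ - C i (φ i)))), φ i⟫ ≥
      c * (‖ψ‖ ^ 2 + ∑ i, ‖φ i‖ ^ 2) :=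
  stmt_8_general n η0 η hη0 hη cs hcs C0 C hC0sym hCsym hC0lb hClb
end

section
/- Let $C_1, C_2$ be symmetric positive definite operators on a finite-dimensional real inner product space, $\eta_1, \eta_2 > 0$, and suppose $C_1 C_2 = C_2 C_1$. Set $B_1 = \eta_2 C_1^{-1} + (\eta_1 + \eta_2) C_2^{-1}$, $B_2 = \eta_1 \eta_2 C_2^{-1} C_1^{-1}$, $E = B_2^{-1/2} B_1 B_2^{-1/2}$, and $F = B_2^{-1}$. Then $\frac{1}{4}E^2 - F$ is symmetric and positive definite. -/
/-!
With `D = η₂C₁⁻¹ - (η₁ - η₂)C₂⁻¹`, commutativity of `C₁⁻¹` and `C₂⁻¹` gives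
`¼B₁² - B₂ = ¼D² + η₁η₂C₂⁻²`. Since `S² = F = B₂⁻¹` commutes with `C₁⁻¹` and `C₂⁻¹`,
conjugating by `S` turns this into `¼E² - F = ¼(SDS)² + η₁η₂(SC₂⁻¹S)²`: a sum of squares of
self-adjoint operators, the second of them injective. `S` never has to commute with `B₁`.
-/

open scoped RealInnerProductSpace

theorem conj_sq_of_commute {M : Type*} [Monoid M] {S x : M} (h : Commute (S * S) x) :
    (S * x * S) ^ 2 = S * (S * S * x ^ 2) * S := by
  calc (S * x * S) ^ 2 = S * (x * (S * S)) * x * S := by simp only [sq, mul_assoc]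
    _ = S * (S * S * x ^ 2) * S := by rw [← h.eq]; simp only [sq, mul_assoc]

namespace Burgers

variable {R : Type*} [Ring R] [Algebra ℝ R] (η₁ η₂ : ℝ) {a b : R}

theorem quarter_sq_sub_eq (hab : Commute a b) :
    (1 / 4 : ℝ) • (η₂ • a + (η₁ + η₂) • b) ^ 2 - (η₁ * η₂) • (b * a) =
      (1 / 4 : ℝ) • (η₂ • a - (η₁ - η₂) • b) ^ 2 + (η₁ * η₂) • b ^ 2 := by
  simp only [sq, mul_add, add_mul, mul_sub, sub_mul, smul_mul_assoc, mul_smul_comm, smul_smul,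
    smul_add, smul_sub, hab.eq]
  module

theorem conj_quarter_sq_sub_eq {S : R} (hab : Commute a b) (hSa : Commute (S * S) a)
    (hSb : Commute (S * S) b) (hS : S * S * ((η₁ * η₂) • (b * a)) = 1) :
    (1 / 4 : ℝ) • (S * (η₂ • a + (η₁ + η₂) • b) * S) ^ 2 - S * S =
      (1 / 4 : ℝ) • (S * (η₂ • a - (η₁ - η₂) • b) * S) ^ 2 + (η₁ * η₂) • (S * b * S) ^ 2 := by
  have hB₁ := (hSa.smul_right η₂).add_right (hSb.smul_right (η₁ + η₂))
  have hD := (hSa.smul_right η₂).sub_right (hSb.smul_right (η₁ - η₂))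
  calc (1 / 4 : ℝ) • (S * (η₂ • a + (η₁ + η₂) • b) * S) ^ 2 - S * S
      = S * (S * S * ((1 / 4 : ℝ) • (η₂ • a + (η₁ + η₂) • b) ^ 2 - (η₁ * η₂) • (b * a))) * S := by
        rw [mul_sub, mul_sub, sub_mul, hS, mul_one, conj_sq_of_commute hB₁]
        simp only [mul_smul_comm, smul_mul_assoc]
    _ = S * (S * S * ((1 / 4 : ℝ) • (η₂ • a - (η₁ - η₂) • b) ^ 2 + (η₁ * η₂) • b ^ 2)) * S := by
        rw [quarter_sq_sub_eq η₁ η₂ hab]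
    _ = _ := by
        rw [conj_sq_of_commute hD, conj_sq_of_commute hSb]
        simp only [mul_add, add_mul, mul_smul_comm, smul_mul_assoc]

end Burgers

section InnerProductSpace

variable {V : Type*} [NormedAddCommGroup V] [InnerProductSpace ℝ V] [CompleteSpace V]

theorem IsSelfAdjoint.inner_sq_apply_self {T : V →L[ℝ] V} (hT : IsSelfAdjoint T) (x : V) :
    ⟪(T ^ 2) x, x⟫ = ‖T x‖ ^ 2 := by
  rw [sq, mul_apply_eq_comp, hT.isSymmetric.apply_clm, real_inner_self_eq_norm_sq]

theorem inner_smul_sq_add_smul_sq_apply_self_pos {T₁ T₂ : V →L[ℝ] V} (hT₁ : IsSelfAdjoint T₁)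
    (hT₂ : IsSelfAdjoint T₂) (hT₂inj : Function.Injective T₂) {c₁ c₂ : ℝ} (hc₁ : 0 ≤ c₁)
    (hc₂ : 0 < c₂) {x : V} (hx : x ≠ 0) : 0 < ⟪(c₁ • T₁ ^ 2 + c₂ • T₂ ^ 2) x, x⟫ := by
  have hT₂x : T₂ x ≠ 0 := (map_ne_zero_iff T₂ hT₂inj).mpr hx
  rw [add_apply, inner_add_left, smul_apply, smul_apply, real_inner_smul_left, real_inner_smul_left,
    hT₁.inner_sq_apply_self, hT₂.inner_sq_apply_self]
  positivity

end InnerProductSpace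

theorem ContinuousLinearMap.injective_of_mul_eq_one {R M : Type*} [Semiring R] [TopologicalSpace M]
    [AddCommMonoid M] [Module R M] {L T : M →L[R] M} (h : L * T = 1) : Function.Injective T :=
  Function.LeftInverse.injective (g := L) fun x => by
    rw [← mul_apply_eq_comp, h, one_apply_eq_self]

theorem stmt_19_general {V : Type*} [NormedAddCommGroup V] [InnerProductSpace ℝ V]
    [FiniteDimensional ℝ V]
    (η1 η2 : ℝ) (hη1 : 0 < η1) (hη2 : 0 < η2)
    (C1 C2 C1i C2i S F B1 B2 E : V →L[ℝ] V)
    (hC1sym : ∀ x y : V, ⟪C1 x, y⟫ = ⟪x, C1 y⟫)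
    (hC2sym : ∀ x y : V, ⟪C2 x, y⟫ = ⟪x, C2 y⟫)
    (hcomm : C1 * C2 = C2 * C1)
    (hC1i : C1 * C1i = 1 ∧ C1i * C1 = 1)
    (hC2i : C2 * C2i = 1 ∧ C2i * C2 = 1)
    (hB1 : B1 = η2 • C1i + (η1 + η2) • C2i)
    (hB2 : B2 = (η1 * η2) • (C2i * C1i))
    -- `S` is the inverse of the positive square root of `B₂`,
    -- i.e. `S = B₂^{-1/2}`: self-adjoint, positive definite, `S² B₂ = 1`.
    (hSsym : ∀ x y : V, ⟪S x, y⟫ = ⟪x, S y⟫)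
    (hS : S * S * B2 = 1)
    (hF : F * B2 = 1 ∧ B2 * F = 1)
    (hE : E = S * B1 * S) :
    (∀ x y : V, ⟪((1 / 4 : ℝ) • (E * E) - F) x, y⟫ =
        ⟪x, ((1 / 4 : ℝ) • (E * E) - F) y⟫) ∧
    ∀ x : V, x ≠ 0 → 0 < ⟪((1 / 4 : ℝ) • (E * E) - F) x, x⟫ := by
  let _ : Invertible C1 := ⟨C1i, hC1i.2, hC1i.1⟩
  let _ : Invertible C2 := ⟨C2i, hC2i.2, hC2i.1⟩
  let _ : Invertible B2 := ⟨F, hF.1, hF.2⟩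
  have hSS : S * S = F := by rw [← mul_one (S * S), ← hF.2, ← mul_assoc, hS, one_mul]
  have hab : Commute C1i C2i := (Commute.invOf_left hcomm).invOf_right
  have hSSa : Commute (S * S) C1i := hSS ▸ Commute.invOf_left (b := B2)
    (by rw [hB2]; exact (hab.symm.mul_left (.refl C1i)).smul_left _)
  have hSSb : Commute (S * S) C2i := hSS ▸ Commute.invOf_left (b := B2)
    (by rw [hB2]; exact ((Commute.refl C2i).mul_left hab).smul_left _)
  have hdisc : (1 / 4 : ℝ) • (E * E) - F =
      (1 / 4 : ℝ) • (S * (η2 • C1i - (η1 - η2) • C2i) * S) ^ 2 + (η1 * η2) • (S * C2i * S) ^ 2 := by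
    rw [hE, hB1, ← hSS, ← sq]
    rw [hB2] at hS
    exact Burgers.conj_quarter_sq_sub_eq η1 η2 hab hSSa hSSb hS
  have hSsa : IsSelfAdjoint S := ContinuousLinearMap.isSelfAdjoint_iff_isSymmetric.mpr hSsym
  have ha : IsSelfAdjoint C1i :=
    (ContinuousLinearMap.isSelfAdjoint_iff_isSymmetric.mpr hC1sym).invOf
  have hb : IsSelfAdjoint C2i :=
    (ContinuousLinearMap.isSelfAdjoint_iff_isSymmetric.mpr hC2sym).invOf
  have hT₁ : IsSelfAdjoint (S * (η2 • C1i - (η1 - η2) • C2i) * S) :=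
    (((IsSelfAdjoint.all _).smul ha).sub ((IsSelfAdjoint.all _).smul hb)).conjugate_self hSsa
  have hT₂ : IsSelfAdjoint (S * C2i * S) := hb.conjugate_self hSsa
  have hSinj : Function.Injective S :=
    ContinuousLinearMap.injective_of_mul_eq_one (L := B2 * S) (by rw [mul_assoc, hSS, hF.2])
  have hT₂inj : Function.Injective (S * C2i * S) :=
    (hSinj.comp (ContinuousLinearMap.injective_of_mul_eq_one hC2i.1)).comp hSinj
  rw [hdisc]
  exact ⟨(((IsSelfAdjoint.all _).smul (hT₁.pow 2)).add
    ((IsSelfAdjoint.all _).smul (hT₂.pow 2))).isSymmetric,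
    fun x hx => inner_smul_sq_add_smul_sq_apply_self_pos hT₁ hT₂ hT₂inj (by norm_num)
      (mul_pos hη1 hη2) hx⟩

/-- For commuting symmetric positive definite `C₁, C₂` and `η₁, η₂ > 0`, with
`B₁ = η₂C₁⁻¹ + (η₁+η₂)C₂⁻¹`, `B₂ = η₁η₂C₂⁻¹C₁⁻¹`, `E = B₂^{-1/2} B₁ B₂^{-1/2}`,
`F = B₂⁻¹`, the operator `¼E² - F` is symmetric and positive definite. -/
theorem stmt_19 {V : Type*} [NormedAddCommGroup V] [InnerProductSpace ℝ V]
    [FiniteDimensional ℝ V]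
    (η1 η2 : ℝ) (hη1 : 0 < η1) (hη2 : 0 < η2)
    (C1 C2 C1i C2i S F B1 B2 E : V →L[ℝ] V)
    (hC1sym : ∀ x y : V, ⟪C1 x, y⟫ = ⟪x, C1 y⟫)
    (hC2sym : ∀ x y : V, ⟪C2 x, y⟫ = ⟪x, C2 y⟫)
    (hC1pos : ∀ x : V, x ≠ 0 → 0 < ⟪C1 x, x⟫)
    (hC2pos : ∀ x : V, x ≠ 0 → 0 < ⟪C2 x, x⟫)
    (hcomm : C1 * C2 = C2 * C1)
    (hC1i : C1 * C1i = 1 ∧ C1i * C1 = 1)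
    (hC2i : C2 * C2i = 1 ∧ C2i * C2 = 1)
    (hB1 : B1 = η2 • C1i + (η1 + η2) • C2i)
    (hB2 : B2 = (η1 * η2) • (C2i * C1i))
    -- `S` is the inverse of the positive square root of `B₂`,
    -- i.e. `S = B₂^{-1/2}`: self-adjoint, positive definite, `S² B₂ = 1`.
    (hSsym : ∀ x y : V, ⟪S x, y⟫ = ⟪x, S y⟫)
    (hSpos : ∀ x : V, x ≠ 0 → 0 < ⟪S x, x⟫)
    (hS : S * S * B2 = 1)
    (hF : F * B2 = 1 ∧ B2 * F = 1)
    (hE : E = S * B1 * S) :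
    (∀ x y : V, ⟪((1 / 4 : ℝ) • (E * E) - F) x, y⟫ =
        ⟪x, ((1 / 4 : ℝ) • (E * E) - F) y⟫) ∧
    ∀ x : V, x ≠ 0 → 0 < ⟪((1 / 4 : ℝ) • (E * E) - F) x, x⟫ :=
  stmt_19_general η1 η2 hη1 hη2 C1 C2 C1i C2i S F B1 B2 E hC1sym hC2sym hcomm hC1i hC2i hB1 hB2
    hSsym hS hF hE
end
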